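/- Let $X_t = \exp((r - \sigma^2/2)t + \sigma W_t)\xi$ be the geometric Brownian motion with initial value $\xi > 0$, drift $r$, and volatility $\sigma > 0$ driven by a standard Brownian motion $W$. Then for every strike $K > 0$, the discounted expected payoff of a European call satisfies $\mathbb{E}[e^{-rT}\max\{X_T - K, 0\}] = \xi\,\mathfrak{N}\big(\frac{(r+\sigma^2/2)T + \ln(\xi/K)}{\sigma\sqrt{T}}\big) - K e^{-rT}\,\mathfrak{N}\big(\frac{(r-\sigma^2/2)T + \ln(\xi/K)}{\sigma\sqrt{T}}\big)$, where $\mathfrak{N}(x) = \int_{-\infty}^x \frac{1}{\sqrt{2\pi}} e^{-y^2/2}\,dy$ is the standard normal CDF. -/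

import Mathlib

/-!
Write `X_T = ξ exp (m + a Z)` with `m = (r - σ²/2) T` and `a = σ √T`. The payoff vanishes
except on the half-line `Z ≥ -d`, `d = (m + log (ξ / K)) / a`, where the strike contributes
`K ℙ(Z ≥ -d) = K 𝔑(d)`. The other term is an exponential tilt: `exp (a z)` times the
standard Gaussian density is `exp (a² / 2)` times the Gaussian density of mean `a`, so it
contributes `ξ exp (m + a² / 2) 𝔑(d + a)`, and `m + a² / 2 = r T` cancels the discount factor.
-/

open MeasureTheory ProbabilityTheory

/-- The standard normal cumulative distribution function
`𝔑(x) = ∫_{-∞}^x (2π)^{-1/2} exp(-y²/2) dy`. -/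
noncomputable def stdNormalCDF (x : ℝ) : ℝ :=
  ∫ y in Set.Iic x, (Real.sqrt (2 * Real.pi))⁻¹ * Real.exp (-(y ^ 2) / 2)

open Real Set
open scoped NNReal

namespace ProbabilityTheory

lemma setIntegral_gaussianReal_eq_setIntegral_smul {E : Type*} [NormedAddCommGroup E]
    [NormedSpace ℝ E] (μ : ℝ) {v : ℝ≥0} (hv : v ≠ 0) (f : ℝ → E) (s : Set ℝ) :
    ∫ x in s, f x ∂gaussianReal μ v = ∫ x in s, gaussianPDFReal μ v x • f x := by
  simp_rw [gaussianReal_of_var_ne_zero μ hv, setIntegral_withDensity_eq_setIntegral_toReal_smul' s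
    (measurable_gaussianPDF μ v) (ae_of_all _ fun _ ↦ gaussianPDF_lt_top), toReal_gaussianPDF]

lemma gaussianReal_real_apply (μ : ℝ) {v : ℝ≥0} (hv : v ≠ 0) (s : Set ℝ) :
    (gaussianReal μ v).real s = ∫ x in s, gaussianPDFReal μ v x := by
  rw [measureReal_def, gaussianReal_apply_eq_integral μ hv,
    ENNReal.toReal_ofReal (integral_nonneg fun x ↦ gaussianPDFReal_nonneg μ v x)]

lemma exp_mul_mul_gaussianPDFReal (μ : ℝ) (v : ℝ≥0) (a z : ℝ) :
    exp (a * z) * gaussianPDFReal μ v z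
      = exp (μ * a + v * a ^ 2 / 2) * gaussianPDFReal (μ + v * a) v z := by
  rcases eq_or_ne v 0 with rfl | hv
  · simp [gaussianPDFReal_zero_var]
  simp only [gaussianPDFReal]
  rw [mul_left_comm, ← exp_add, mul_left_comm (exp _), ← exp_add]
  congr 2
  field_simp
  ring

lemma setIntegral_exp_mul_gaussianReal (μ : ℝ) {v : ℝ≥0} (hv : v ≠ 0) (a : ℝ) (s : Set ℝ) :
    ∫ z in s, exp (a * z) ∂gaussianReal μ v
      = exp (μ * a + v * a ^ 2 / 2) * (gaussianReal (μ + v * a) v).real s := by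
  simp_rw [setIntegral_gaussianReal_eq_setIntegral_smul μ hv, gaussianReal_real_apply _ hv,
    smul_eq_mul, mul_comm (gaussianPDFReal μ v _), exp_mul_mul_gaussianPDFReal, integral_const_mul]

end ProbabilityTheory

lemma stdNormalCDF_eq_gaussianReal_real_Iic (x : ℝ) :
    stdNormalCDF x = (gaussianReal 0 1).real (Iic x) := by
  simp [gaussianReal_real_apply, stdNormalCDF, gaussianPDFReal]

lemma gaussianReal_real_Ici (μ c : ℝ) :
    (gaussianReal μ 1).real (Ici c) = stdNormalCDF (μ - c) := by
  have hmap : (gaussianReal μ 1).map (μ - ·) = gaussianReal 0 1 := by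
    rw [gaussianReal_map_const_sub, sub_self]
  rw [stdNormalCDF_eq_gaussianReal_real_Iic, ← hmap,
    map_measureReal_apply (by fun_prop) measurableSet_Iic]
  congr 1
  ext z
  simp

lemma le_mul_exp_add_mul_iff {ξ K a : ℝ} (hξ : 0 < ξ) (hK : 0 < K) (ha : 0 < a) (m z : ℝ) :
    K ≤ ξ * exp (m + a * z) ↔ -((m + log (ξ / K)) / a) ≤ z := by
  rw [← div_le_iff₀' hξ, ← log_le_iff_le_exp (div_pos hK hξ), neg_le, le_div_iff₀ ha,
    ← inv_div, log_inv]
  constructor <;> intro h <;> linarith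

lemma max_mul_exp_sub_eq_indicator {ξ K a : ℝ} (hξ : 0 < ξ) (hK : 0 < K) (ha : 0 < a) (m z : ℝ) :
    max (ξ * exp (m + a * z) - K) 0
      = (Ici (-((m + log (ξ / K)) / a))).indicator (fun z ↦ ξ * exp (m + a * z) - K) z := by
  by_cases h : K ≤ ξ * exp (m + a * z)
  · rw [indicator_of_mem (mem_Ici.2 ((le_mul_exp_add_mul_iff hξ hK ha m z).1 h)),
      max_eq_left (by linarith)]
  · rw [indicator_of_notMem (mt (le_mul_exp_add_mul_iff hξ hK ha m z).2 h ∘ mem_Ici.1),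
      max_eq_right (by linarith)]

theorem integral_max_mul_exp_sub_gaussianReal {ξ K a : ℝ} (hξ : 0 < ξ) (hK : 0 < K) (ha : 0 < a)
    (m : ℝ) :
    ∫ z, max (ξ * exp (m + a * z) - K) 0 ∂gaussianReal 0 1
      = ξ * exp (m + a ^ 2 / 2) * stdNormalCDF ((m + log (ξ / K)) / a + a)
        - K * stdNormalCDF ((m + log (ξ / K)) / a) := by
  have hexp (z : ℝ) : ξ * exp (m + a * z) - K = ξ * exp m * exp (a * z) - K := by
    rw [exp_add, mul_assoc]
  have hint : Integrable (fun z ↦ exp (a * z)) (gaussianReal 0 1) :=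
    integrable_exp_mul_gaussianReal a
  simp_rw [max_mul_exp_sub_eq_indicator hξ hK ha, integral_indicator measurableSet_Ici, hexp]
  rw [integral_sub (hint.const_mul _).integrableOn (integrable_const K).integrableOn,
    integral_const_mul, setIntegral_exp_mul_gaussianReal 0 one_ne_zero, setIntegral_const,
    gaussianReal_real_Ici, gaussianReal_real_Ici]
  simp only [zero_mul, zero_add, NNReal.coe_one, one_mul, sub_neg_eq_add,
    smul_eq_mul, exp_add, add_comm a]
  ring

/-- Black-Scholes formula for European call options with positive strike. -/
theorem black_scholes_call_price {Ω : Type*} [MeasurableSpace Ω]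
    (μ : Measure Ω) [IsProbabilityMeasure μ]
    (ξ T σ K : ℝ) (hξ : 0 < ξ) (hT : 0 < T) (hσ : 0 < σ) (hK : 0 < K) (r : ℝ)
    (Z : Ω → ℝ) (hZmeas : Measurable Z)
    (hZ : Measure.map Z μ = gaussianReal 0 1)
    (W X : Ω → ℝ)
    (hW : ∀ ω, W ω = Real.sqrt T * Z ω)
    (hX : ∀ ω, X ω = ξ * Real.exp ((r - σ ^ 2 / 2) * T + σ * W ω)) :
    ∫ ω, Real.exp (-r * T) * max (X ω - K) 0 ∂μ
      = ξ * stdNormalCDF (((r + σ ^ 2 / 2) * T + Real.log (ξ / K)) / (σ * Real.sqrt T))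
        - K * Real.exp (-r * T)
            * stdNormalCDF (((r - σ ^ 2 / 2) * T + Real.log (ξ / K)) / (σ * Real.sqrt T)) := by
  set a := σ * √T
  have ha : 0 < a := mul_pos hσ (sqrt_pos.2 hT)
  have ha_sq : a ^ 2 = σ ^ 2 * T := by rw [mul_pow, sq_sqrt hT.le]
  have hd : ((r - σ ^ 2 / 2) * T + log (ξ / K)) / a + a
      = ((r + σ ^ 2 / 2) * T + log (ξ / K)) / a := by
    rw [div_add' _ _ _ ha.ne', ← sq, ha_sq]
    ring
  have hdrift : (r - σ ^ 2 / 2) * T + a ^ 2 / 2 = r * T := by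
    rw [ha_sq]; ring
  have hdiscount : exp (-r * T) * exp (r * T) = 1 := by rw [← exp_add]; simp
  calc ∫ ω, exp (-r * T) * max (X ω - K) 0 ∂μ
      = ∫ ω, exp (-r * T) * max (ξ * exp ((r - σ ^ 2 / 2) * T + a * Z ω) - K) 0 ∂μ := by
        simp_rw [hX, hW, ← mul_assoc]
        rfl
    _ = ∫ z, exp (-r * T) * max (ξ * exp ((r - σ ^ 2 / 2) * T + a * z) - K) 0
          ∂gaussianReal 0 1 := by
        rw [← hZ, integral_map hZmeas.aemeasurable (by fun_prop)]
    _ = _ := by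
        rw [integral_const_mul, integral_max_mul_exp_sub_gaussianReal hξ hK ha, hd, hdrift]
        linear_combination ξ * stdNormalCDF (((r + σ ^ 2 / 2) * T + log (ξ / K)) / a) * hdiscount
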